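/- In an A-group G, for every w ∈ G and all natural numbers n, m ≥ 1, one has wⁿ ∩ w⁻ᵐ = w ∩ w⁻¹. -/
import Mathlib


namespace ArtinMedian

/-- A median group, presented via a meet-semilattice operation `∩` (with induced
order `x ⊂ y ↔ x ∩ y = x`) satisfying: (1) `1 ⊂ x`; (2) `x ⊂ y → y ⊂ z →
z⁻¹y ⊂ z⁻¹x`; (3) `x⁻¹(x ∩ y) ⊂ x⁻¹y`. -/
class MedianGroup (G : Type*) extends Group G where
  meet : G → G → G
  meet_comm : ∀ x y, meet x y = meet y x
  meet_assoc : ∀ x y z, meet (meet x y) z = meet x (meet y z)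
  meet_idem : ∀ x, meet x x = x
  one_meet : ∀ x, meet 1 x = 1
  inv_mul_antitone : ∀ x y z, meet x y = x → meet y z = y →
    meet (z⁻¹ * y) (z⁻¹ * x) = z⁻¹ * y
  meet_axiom : ∀ x y, meet (x⁻¹ * meet x y) (x⁻¹ * y) = x⁻¹ * meet x y

namespace MedianGroup

variable {G : Type*} [MedianGroup G]

/-- The order `x ⊂ y` of a median group. -/
def sub (x y : G) : Prop := meet x y = x

/-- `j` is the join (least upper bound) `x ∪ y`. -/
def isJoin (x y j : G) : Prop :=
  sub x j ∧ sub y j ∧ ∀ c, sub x c → sub y c → sub j c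

/-- The join `x ∪ y` exists (`x ∪ y ≠ ∞`). -/
def hasJoin (x y : G) : Prop := ∃ j, isJoin x y j

/-- Orthogonality: `x ⊥ y` iff `x ∩ y = 1` and `x ∪ y` exists. -/
def orth (x y : G) : Prop := meet x y = 1 ∧ hasJoin x y

/-- `G` is a `⊥`-group: `x ⊥ y` implies `x ∪ y = xy`. -/
def PerpGroup (G : Type*) [MedianGroup G] : Prop :=
  ∀ x y : G, orth x y → isJoin x y (x * y)

/-- Axiom A₁: `x ∪ y` exists and `x⁻¹ ⊂ y⁻¹` imply `x ⊂ y`. -/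
def A1 (G : Type*) [MedianGroup G] : Prop :=
  ∀ x y : G, hasJoin x y → sub x⁻¹ y⁻¹ → sub x y

/-- Axiom A₂: `x ∩ y = x⁻¹ ∩ z = y⁻¹ ∩ z = 1` imply `xz ∩ yz ⊂ z`. -/
def A2 (G : Type*) [MedianGroup G] : Prop :=
  ∀ x y z : G, meet x y = 1 → meet x⁻¹ z = 1 → meet y⁻¹ z = 1 →
    sub (meet (x * z) (y * z)) z

/-- Axiom A₄: if `x ∪ x⁻¹` exists then `x = 1`. -/
def A4 (G : Type*) [MedianGroup G] : Prop :=
  ∀ x : G, hasJoin x x⁻¹ → x = 1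

/-- An A-group: a `⊥`-group satisfying A₁, A₂ and A₄. -/
def AGroup (G : Type*) [MedianGroup G] : Prop :=
  PerpGroup G ∧ A1 G ∧ A2 G ∧ A4 G

/-- The median of a median group: `Y(x,y,z) = x·((x⁻¹y) ∩ (x⁻¹z))`. -/
def medY (x y z : G) : G := x * meet (x⁻¹ * y) (x⁻¹ * z)

/-- The interval (cell) `[x,y]` of a median group. -/
def interval (x y : G) : Set G := {z | sub (x⁻¹ * z) (x⁻¹ * y)}

/-- Convexity of a subset of a median group. -/
def IsConvex (C : Set G) : Prop :=
  ∀ x y z : G, x ∈ C → y ∈ C → medY x z y ∈ C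

/-! ### Basic order lemmas -/

lemma sub_refl (x : G) : sub x x := meet_idem x

lemma sub_trans {x y z : G} (h1 : sub x y) (h2 : sub y z) : sub x z := by
  unfold sub at *
  calc meet x z = meet (meet x y) z := by rw [h1]
    _ = meet x (meet y z) := meet_assoc _ _ _
    _ = meet x y := by rw [h2]
    _ = x := h1

lemma sub_antisymm {x y : G} (h1 : sub x y) (h2 : sub y x) : x = y := by
  unfold sub at *
  rw [← h1, meet_comm, h2]

lemma one_sub (x : G) : sub 1 x := one_meet x

lemma sub_one {x : G} (h : sub x 1) : x = 1 := sub_antisymm h (one_sub x)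

lemma meet_sub_left (x y : G) : sub (meet x y) x := by
  unfold sub
  calc meet (meet x y) x = meet (meet y x) x := by rw [meet_comm x y]
    _ = meet y (meet x x) := meet_assoc _ _ _
    _ = meet y x := by rw [meet_idem]
    _ = meet x y := meet_comm _ _

lemma meet_sub_right (x y : G) : sub (meet x y) y := by
  unfold sub
  calc meet (meet x y) y = meet x (meet y y) := meet_assoc _ _ _
    _ = meet x y := by rw [meet_idem]

lemma sub_meet {z x y : G} (h1 : sub z x) (h2 : sub z y) : sub z (meet x y) := by
  unfold sub at *
  calc meet z (meet x y) = meet (meet z x) y := (meet_assoc _ _ _).symm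
    _ = meet z y := by rw [h1]
    _ = z := h2

lemma sub_of_meet_sub {x y z : G} (h : sub y z) : sub (meet x y) (meet x z) :=
  sub_meet (meet_sub_left x y) (sub_trans (meet_sub_right x y) h)

lemma meet_eq_one_of_sub {x y z : G} (h : sub x y) (h2 : meet y z = 1) : meet x z = 1 := by
  have h3 : sub (meet x z) (meet y z) := by
    exact sub_meet (sub_trans (meet_sub_left x z) h) (meet_sub_right x z)
  rw [h2] at h3
  exact sub_one h3

/-! ### Core translation lemmas -/

lemma M2 {x y z : G} (h1 : sub x y) (h2 : sub y z) : sub (z⁻¹ * y) (z⁻¹ * x) :=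
  inv_mul_antitone x y z h1 h2

lemma M3 (x y : G) : sub (x⁻¹ * meet x y) (x⁻¹ * y) := meet_axiom x y

/-- (P) forward: `y ⊂ z → z⁻¹y ⊂ z⁻¹`. -/
lemma P_mp {y z : G} (h : sub y z) : sub (z⁻¹ * y) z⁻¹ := by
  have := M2 (one_sub y) h
  simpa using this

/-- (P) backward. -/
lemma P_mpr {y z : G} (h : sub (z⁻¹ * y) z⁻¹) : sub y z := by
  have := P_mp h
  simpa [mul_assoc] using this

/-- (I): interval symmetry. -/
lemma I_lemma {x y z : G} (h : sub (x⁻¹ * z) (x⁻¹ * y)) : sub (y⁻¹ * z) (y⁻¹ * x) := by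
  have := P_mp h
  simpa [mul_assoc] using this

/-- (C): `t ⊂ w`, `u ∈ [t,w]` implies `u ⊂ w`. -/
lemma C_lemma {t w u : G} (h1 : sub t w) (h2 : sub (t⁻¹ * u) (t⁻¹ * w)) : sub u w :=
  P_mpr (sub_trans (I_lemma h2) (P_mp h1))

/-- (D): `t ⊂ w`, `u ∈ [t,w]` implies `t ⊂ u`. -/
lemma D_lemma {t w u : G} (h1 : sub t w) (h2 : sub (t⁻¹ * u) (t⁻¹ * w)) : sub t u := by
  have h5 := M2 (I_lemma h2) (P_mp h1)
  simpa [mul_assoc] using h5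

/-- (E) forward: `u ∩ v = 1 → u⁻¹ ⊂ u⁻¹v`. -/
lemma E_mp {u v : G} (h : meet u v = 1) : sub u⁻¹ (u⁻¹ * v) := by
  have := M3 u v
  rw [h, mul_one] at this
  exact this

/-- (E) backward: `u⁻¹ ⊂ u⁻¹v → u ∩ v = 1`. -/
lemma E_mpr {u v : G} (h : sub u⁻¹ (u⁻¹ * v)) : meet u v = 1 := by
  have hpu : sub (meet u v) u := meet_sub_left u v
  have hpv : sub (meet u v) v := meet_sub_right u v
  have h1 : sub (u⁻¹ * meet u v) u⁻¹ := P_mp hpu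
  have h4 : sub v⁻¹ (v⁻¹ * meet u v) := by
    have := M2 h1 h
    simpa [mul_assoc] using this
  have h5 : sub (v⁻¹ * meet u v) v⁻¹ := P_mp hpv
  have h6 : v⁻¹ = v⁻¹ * meet u v := sub_antisymm h4 h5
  nth_rewrite 1 [← mul_one v⁻¹] at h6
  exact (mul_left_cancel h6).symm

/-- `x ⊂ x*y ↔ x⁻¹ ∩ y = 1` (the forward direction). -/
lemma sub_mul_of_meet {x y : G} (h : meet x⁻¹ y = 1) : sub x (x * y) := by
  have := E_mp h
  simpa using this

lemma meet_of_sub_mul {x y : G} (h : sub x (x * y)) : meet x⁻¹ y = 1 := by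
  apply E_mpr
  simpa using h

/-- (T): translation of meets past a common lower bound. -/
lemma T_lemma {g A B : G} (h1 : sub g A) (h2 : sub g B) :
    meet A B = g * meet (g⁻¹ * A) (g⁻¹ * B) := by
  set S := meet (g⁻¹ * A) (g⁻¹ * B) with hS
  have hSA : sub S (g⁻¹ * A) := meet_sub_left _ _
  have hSB : sub S (g⁻¹ * B) := meet_sub_right _ _
  have hgSA : sub (g * S) A := by
    apply C_lemma h1
    simpa [mul_assoc] using hSA
  have hgSB : sub (g * S) B := by
    apply C_lemma h2
    simpa [mul_assoc] using hSB
  have hup : sub (g * S) (meet A B) := sub_meet hgSA hgSB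
  have hgm : sub g (meet A B) := sub_meet h1 h2
  have hggS : sub g (g * S) := by
    apply D_lemma h1
    simpa [mul_assoc] using hSA
  -- meet A B ⊂ g * S
  have hmA : sub (g⁻¹ * meet A B) (g⁻¹ * A) := by
    have := M2 hgm (meet_sub_left A B)
    exact I_lemma this
  have hmB : sub (g⁻¹ * meet A B) (g⁻¹ * B) := by
    have := M2 hgm (meet_sub_right A B)
    exact I_lemma this
  have hmS : sub (g⁻¹ * meet A B) S := sub_meet hmA hmB
  have hdown : sub (meet A B) (g * S) := by
    apply C_lemma hggS
    simpa [mul_assoc] using hmS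
  exact sub_antisymm hdown hup

/-- (GL): gate lemma. If `z ⊂ W` then `x ∩ W ∈ [x, z]`. -/
lemma gate_lemma {x W z : G} (h : sub z W) : sub (x⁻¹ * meet x W) (x⁻¹ * z) := by
  have h1 : sub (meet x z) (meet x W) := sub_of_meet_sub h
  have h2 := M2 h1 (meet_sub_left x W)
  exact sub_trans h2 (M3 x z)


/-! ### Joins -/

lemma isJoin_swap {x y j : G} (h : isJoin x y j) : isJoin y x j :=
  ⟨h.2.1, h.1, fun c hy hx => h.2.2 c hx hy⟩

lemma join_unique {x y j j' : G} (h : isJoin x y j) (h' : isJoin x y j') : j = j' :=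
  sub_antisymm (h.2.2 j' h'.1 h'.2.1) (h'.2.2 j h.1 h.2.1)

/-- (BJ): bounded pairs have joins, namely the median `medY x y C`. -/
lemma bounded_join {x y C : G} (hx : sub x C) (hy : sub y C) :
    isJoin x y (x * meet (x⁻¹ * y) (x⁻¹ * C)) := by
  set S := meet (x⁻¹ * y) (x⁻¹ * C) with hS
  have hSy : sub S (x⁻¹ * y) := meet_sub_left _ _
  have hSC : sub S (x⁻¹ * C) := meet_sub_right _ _
  have hxj : sub x (x * S) := by
    apply D_lemma hx
    simpa [mul_assoc] using hSC
  have hjC : sub (x * S) C := by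
    apply C_lemma hx
    simpa [mul_assoc] using hSC
  have hyj : sub y (x * S) := by
    -- first: y⁻¹ (x S) ⊂ y⁻¹ C  (via M3 for A := x⁻¹y, B := x⁻¹C)
    have h3 := M3 (x⁻¹ * y) (x⁻¹ * C)
    -- h3 : sub ((x⁻¹y)⁻¹ * S) ((x⁻¹y)⁻¹ * (x⁻¹C))
    have h3' : sub (y⁻¹ * (x * S)) (y⁻¹ * C) := by
      simpa [mul_assoc] using h3
    exact D_lemma hy h3'
  refine ⟨hxj, hyj, ?_⟩
  intro c hxc hyc
  -- leastness
  set q := meet (x * S) c with hq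
  have hxq : sub x q := sub_meet hxj hxc
  have hyq : sub y q := sub_meet hyj hyc
  have hqj : sub q (x * S) := meet_sub_left _ _
  have hA : sub ((x * S)⁻¹ * q) ((x * S)⁻¹ * x) := M2 hxq hqj
  have hB : sub ((x * S)⁻¹ * q) ((x * S)⁻¹ * y) := M2 hyq hqj
  have hAB : sub ((x * S)⁻¹ * q) (meet ((x * S)⁻¹ * x) ((x * S)⁻¹ * y)) := sub_meet hA hB
  have hone : meet ((x * S)⁻¹ * x) ((x * S)⁻¹ * y) = 1 := by
    apply E_mpr
    -- u := (xS)⁻¹ x ; u⁻¹ = x⁻¹ (x S) = S ; u⁻¹ * v = x⁻¹ * y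
    have : sub S (x⁻¹ * y) := hSy
    simpa [mul_assoc] using this
  rw [hone] at hAB
  have h1 : (x * S)⁻¹ * q = 1 := sub_one hAB
  have : q = x * S := by
    have := congrArg (fun z => (x * S) * z) h1
    simpa [mul_assoc] using this
  -- q = x S means x S ⊂ c
  rw [← this]
  exact meet_sub_right _ _

lemma hasJoin_of_bounded {x y C : G} (hx : sub x C) (hy : sub y C) : hasJoin x y :=
  ⟨_, bounded_join hx hy⟩

/-- Orthogonal bounded pairs: the join is the product, in both orders; so the two
elements commute. -/
lemma perp_join (hP : PerpGroup G) {x y : G} (h : meet x y = 1) (hJ : hasJoin x y) :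
    isJoin x y (x * y) := hP x y ⟨h, hJ⟩

lemma hasJoin_symm {x y : G} (h : hasJoin x y) : hasJoin y x := by
  obtain ⟨j, hj⟩ := h
  exact ⟨j, isJoin_swap hj⟩

lemma perp_comm (hP : PerpGroup G) {x y : G} (h : meet x y = 1) (hJ : hasJoin x y) :
    x * y = y * x := by
  have h1 := perp_join hP h hJ
  have h2 := perp_join hP (by rw [meet_comm]; exact h) (hasJoin_symm hJ)
  exact join_unique h1 (isJoin_swap h2)

/-- (★): the star finisher. -/
lemma star_finisher (hP : PerpGroup G) {q p : G} (hqp : meet q p = 1) (hJ : hasJoin q p)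
    (h : sub p q⁻¹) : p = 1 := by
  have hj := perp_join hP hqp hJ
  have h1 : sub q (q * p) := hj.1
  have h2 : sub (q * p) q := by
    have := P_mp h
    simpa using this
  have h3 : q * p = q := sub_antisymm h2 h1
  nth_rewrite 2 [← mul_one q] at h3
  exact mul_left_cancel h3



/-! ### Layer 1: powers of an element with `u ∩ u⁻¹ = 1` -/

lemma layer1_pair (hP : PerpGroup G) {u : G} (h : meet u u⁻¹ = 1) :
    ∀ m : ℕ, meet u (u⁻¹ ^ (m + 1)) = 1 ∧ meet u⁻¹ (u ^ (m + 1)) = 1 := by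
  intro m
  induction m using Nat.strong_induction_on with
  | _ m ih =>
    have key : ∀ v : G, meet v v⁻¹ = 1 →
        (∀ k, k < m → meet v⁻¹ (v ^ (k + 1)) = 1) → meet v (v⁻¹ ^ (m + 1)) = 1 := by
      intro v hv hfam
      have chain : ∀ k, k ≤ m → sub v⁻¹ (v⁻¹ ^ (k + 1)) := by
        intro k hk
        induction k with
        | zero => simpa using sub_refl v⁻¹
        | succ k ihk =>
          have h1 : sub v⁻¹ (v⁻¹ ^ (k + 1)) := ihk (Nat.le_of_succ_le hk)
          have hstep : sub (v⁻¹ ^ (k + 1)) (v⁻¹ ^ (k + 2)) := by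
            have hm1 : meet ((v⁻¹ ^ (k + 1))⁻¹) v⁻¹ = 1 := by
              rw [← inv_pow, inv_inv]
              rw [meet_comm]
              exact hfam k (Nat.lt_of_succ_le hk)
            have := sub_mul_of_meet hm1
            simpa [pow_succ] using this
          exact sub_trans h1 hstep
      set p := meet v (v⁻¹ ^ (m + 1)) with hp
      have hpv : sub p v := meet_sub_left _ _
      have hq : meet v⁻¹ p = 1 := by
        rw [meet_comm]
        exact meet_eq_one_of_sub hpv hv
      have hJ : hasJoin v⁻¹ p :=
        hasJoin_of_bounded (chain m le_rfl) (meet_sub_right _ _)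
      have hsub : sub p (v⁻¹)⁻¹ := by simpa using hpv
      exact star_finisher hP hq hJ hsub
    constructor
    · exact key u h (fun k hk => (ih k hk).2)
    · have h' : meet u⁻¹ (u⁻¹)⁻¹ = 1 := by
        rw [inv_inv, meet_comm]; exact h
      have := key u⁻¹ h' (fun k hk => by
        have := (ih k hk).1
        simpa using this)
      simpa using this

lemma layer1_chain (hP : PerpGroup G) {u : G} (h : meet u u⁻¹ = 1) :
    ∀ k l : ℕ, sub (u ^ (k + 1)) (u ^ (k + 1 + l)) := by
  intro k l
  induction l with
  | zero => exact sub_refl _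
  | succ l ihl =>
    have hstep : sub (u ^ (k + 1 + l)) (u ^ (k + 1 + l + 1)) := by
      have hm1 : meet ((u ^ (k + 1 + l))⁻¹) u = 1 := by
        rw [← inv_pow, meet_comm, show k + 1 + l = k + l + 1 by omega]
        exact (layer1_pair hP h (k + l)).1
      have := sub_mul_of_meet hm1
      simpa [pow_succ] using this
    exact sub_trans ihl (by simpa [show k + 1 + (l + 1) = k + 1 + l + 1 by omega] using hstep)

lemma layer1_meet (hP : PerpGroup G) {u : G} (h : meet u u⁻¹ = 1) {n m : ℕ}
    (hn : 1 ≤ n) (hm : 1 ≤ m) : meet (u ^ n) ((u ^ m)⁻¹) = 1 := by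
  apply E_mpr
  have h' : meet u⁻¹ (u⁻¹)⁻¹ = 1 := by rw [inv_inv, meet_comm]; exact h
  have hchain : sub (u⁻¹ ^ n) (u⁻¹ ^ (n + m)) := by
    obtain ⟨k, rfl⟩ := Nat.exists_eq_add_of_le hn
    have := layer1_chain hP h' k m
    rw [show k + 1 = 1 + k by omega] at this
    exact this
  have e2 : (u ^ n)⁻¹ * (u ^ m)⁻¹ = u⁻¹ ^ (n + m) := by
    rw [← mul_inv_rev, ← pow_add, inv_pow, add_comm]
  rw [e2, show (u ^ n)⁻¹ = u⁻¹ ^ n from (inv_pow u n).symm]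
  exact hchain



/-! ### The apparatus attached to an element `w` -/

variable (w : G)

/-- `t = w ∩ w⁻¹`. -/
def tt (w : G) : G := meet w w⁻¹

/-- `c = t⁻¹wt`. -/
def cc (w : G) : G := (tt w)⁻¹ * w * tt w

/-- `p = c ∩ t⁻¹`. -/
def pp (w : G) : G := meet (cc w) (tt w)⁻¹

lemma tt_inv : tt w⁻¹ = tt w := by
  unfold tt; rw [inv_inv, meet_comm]

lemma cc_inv : cc w⁻¹ = (cc w)⁻¹ := by
  unfold cc; rw [tt_inv]; group

lemma pp_inv : pp w⁻¹ = meet (cc w)⁻¹ (tt w)⁻¹ := by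
  unfold pp; rw [tt_inv, cc_inv]

lemma ht_w : sub (tt w) w := meet_sub_left _ _

lemma ht_wi : sub (tt w) w⁻¹ := meet_sub_right _ _

lemma e_a : (tt w)⁻¹ * w = cc w * (tt w)⁻¹ := by unfold cc; group

lemma e_wt : w * tt w = tt w * cc w := by unfold cc; group

lemma e_wit : w⁻¹ * tt w = tt w * (cc w)⁻¹ := by unfold cc; group

/-- `a ∩ b = 1` : maximality of `t`. -/
lemma hab : meet ((tt w)⁻¹ * w) ((tt w)⁻¹ * w⁻¹) = 1 := by
  have h := T_lemma (ht_w w) (ht_wi w)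
  have h2 : tt w = tt w * meet ((tt w)⁻¹ * w) ((tt w)⁻¹ * w⁻¹) := h
  nth_rewrite 1 [← mul_one (tt w)] at h2
  exact (mul_left_cancel h2).symm

/-- `t⁻¹ ∩ a = 1`. -/
lemma hta : meet (tt w)⁻¹ ((tt w)⁻¹ * w) = 1 := by
  apply E_mpr
  simpa using ht_w w

lemma hp_sub_c : sub (pp w) (cc w) := meet_sub_left _ _

lemma hp_sub_ti : sub (pp w) (tt w)⁻¹ := meet_sub_right _ _

/-- `wt ⊂ w`. -/
lemma h_wt_w : sub (w * tt w) w := by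
  apply P_mpr
  simpa using ht_wi w

/-- `w⁻¹t ⊂ w⁻¹`. -/
lemma h_wit_wi : sub (w⁻¹ * tt w) w⁻¹ := by
  apply P_mpr
  simpa using ht_w w

/-- `tp ⊂ t`. -/
lemma h_tp_t : sub (tt w * pp w) (tt w) := by
  apply P_mpr
  simpa using hp_sub_ti w

/-- `tp ⊂ tc = wt` (M3 applied to `p = t⁻¹ ∩ c`). -/
lemma h_tp_wt : sub (tt w * pp w) (w * tt w) := by
  have h := M3 (tt w)⁻¹ (cc w)
  -- h : sub ((t⁻¹)⁻¹ * meet t⁻¹ c) ((t⁻¹)⁻¹ * c)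
  rw [inv_inv] at h
  rw [meet_comm] at h
  -- h : sub (t * meet c t⁻¹) (t * c)
  rw [e_wt]
  exact h

/-- the join `J = t ∪ w⁻¹t = w⁻¹tp`. -/
lemma hJ : isJoin (w⁻¹ * tt w) (tt w) (w⁻¹ * tt w * pp w) := by
  have h := bounded_join (h_wit_wi w) (ht_wi w)
  have e1 : (w⁻¹ * tt w)⁻¹ * tt w = cc w := by unfold cc; group
  have e2 : (w⁻¹ * tt w)⁻¹ * w⁻¹ = (tt w)⁻¹ := by group
  rw [e1, e2] at h
  exact h

/-- `t ⊂ J`. -/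
lemma ht_J : sub (tt w) (w⁻¹ * tt w * pp w) := (hJ w).2.1

/-- `J ⊂ w⁻¹`. -/
lemma hJ_wi : sub (w⁻¹ * tt w * pp w) w⁻¹ := (hJ w).2.2 w⁻¹ (h_wit_wi w) (ht_wi w)

/-- `q ∩ t⁻¹ = 1` where `q = c⁻¹p`. -/
lemma hqt : meet ((cc w)⁻¹ * pp w) (tt w)⁻¹ = 1 := by
  have h := P_mp (ht_J w)
  -- h : sub ((w⁻¹tp)⁻¹ * t) (w⁻¹tp)⁻¹
  have e1 : (w⁻¹ * tt w * pp w)⁻¹ * tt w = (pp w)⁻¹ * cc w := by unfold cc; group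
  have e2 : (w⁻¹ * tt w * pp w)⁻¹ = ((pp w)⁻¹ * cc w) * (tt w)⁻¹ := by unfold cc; group
  rw [e1, e2] at h
  have h3 := meet_of_sub_mul h
  rwa [mul_inv_rev, inv_inv] at h3

/-- `q ∩ p = 1`. -/
lemma hqp : meet ((cc w)⁻¹ * pp w) (pp w) = 1 := by
  have h := M2 (h_tp_t w) (ht_J w)
  -- h : sub (J⁻¹ * t) (J⁻¹ * (t * p))
  have e1 : (w⁻¹ * tt w * pp w)⁻¹ * tt w = (pp w)⁻¹ * cc w := by unfold cc; group
  have e2 : (w⁻¹ * tt w * pp w)⁻¹ * (tt w * pp w) = ((pp w)⁻¹ * cc w) * pp w := by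
    unfold cc; group
  rw [e1, e2] at h
  have h3 := meet_of_sub_mul h
  rwa [mul_inv_rev, inv_inv] at h3

/-- `p ∩ a = 1`. -/
lemma hpa : meet (pp w) ((tt w)⁻¹ * w) = 1 :=
  meet_eq_one_of_sub (hp_sub_ti w) (hta w)

/-- `p⁻¹ ∩ p⁻¹c = 1`. -/
lemma hmu : meet (pp w)⁻¹ ((pp w)⁻¹ * cc w) = 1 := by
  apply E_mpr
  rw [inv_inv]
  have e : pp w * ((pp w)⁻¹ * cc w) = cc w := by group
  rw [e]
  exact hp_sub_c w

/-- `p⁻¹c ⊂ p⁻¹a`. -/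
lemma h_pic_pia : sub ((pp w)⁻¹ * cc w) ((pp w)⁻¹ * ((tt w)⁻¹ * w)) := by
  apply P_mpr
  have e1 : ((pp w)⁻¹ * ((tt w)⁻¹ * w))⁻¹ * ((pp w)⁻¹ * cc w) = tt w := by unfold cc; group
  have e2 : ((pp w)⁻¹ * ((tt w)⁻¹ * w))⁻¹ = w⁻¹ * tt w * pp w := by group
  rw [e1, e2]
  exact ht_J w

/-- `p⁻¹ ⊂ p⁻¹a`. -/
lemma h_pi_pia : sub (pp w)⁻¹ ((pp w)⁻¹ * ((tt w)⁻¹ * w)) := E_mp (hpa w)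

/-- `c` and `p` commute. -/
lemma hcomm (hP : PerpGroup G) : cc w * pp w = pp w * cc w := by
  have hJn : hasJoin (pp w)⁻¹ ((pp w)⁻¹ * cc w) :=
    hasJoin_of_bounded (h_pi_pia w) (h_pic_pia w)
  have h := perp_comm hP (hmu w) hJn
  have h2 : (pp w)⁻¹ * cc w = cc w * (pp w)⁻¹ := by
    have := congrArg (fun x => pp w * x) h
    simpa [mul_assoc] using this
  have h3 := congrArg (fun x => pp w * x * pp w) h2
  simpa [mul_assoc] using h3

/-- `p⁻¹ ⊂ c⁻¹`. -/
lemma h_pi_ci (hP : PerpGroup G) : sub (pp w)⁻¹ (cc w)⁻¹ := by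
  have h1 : meet (pp w) ((cc w)⁻¹ * pp w) = 1 := by
    rw [meet_comm]; exact hqp w
  have h2 := E_mp h1
  -- h2 : sub p⁻¹ (p⁻¹ * (c⁻¹ * p))
  have e : (pp w)⁻¹ * ((cc w)⁻¹ * pp w) = (cc w)⁻¹ := by
    have hc := hcomm w hP
    have : (pp w)⁻¹ * (cc w)⁻¹ = (cc w)⁻¹ * (pp w)⁻¹ := by
      have := congrArg (fun x => x⁻¹) hc
      simpa [mul_inv_rev] using this
    rw [← mul_assoc, this, mul_assoc]
    simp
  rwa [e] at h2

/-! ### Mirror lemmas and the `p, p'` interaction -/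

lemma hp'_sub_ci : sub (pp w⁻¹) (cc w)⁻¹ := by
  have := hp_sub_c (w := w⁻¹)
  rwa [cc_inv] at this

lemma hp'_sub_ti : sub (pp w⁻¹) (tt w)⁻¹ := by
  have := hp_sub_ti (w := w⁻¹)
  rwa [tt_inv] at this

/-- `q' ∩ t⁻¹ = 1` where `q' = c p'`. -/
lemma hq't : meet (cc w * pp w⁻¹) (tt w)⁻¹ = 1 := by
  have := hqt (w := w⁻¹)
  rwa [cc_inv, inv_inv, tt_inv] at this

/-- `c` and `p'` commute. -/
lemma hcomm' (hP : PerpGroup G) : cc w * pp w⁻¹ = pp w⁻¹ * cc w := by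
  have h := hcomm w⁻¹ hP
  rw [cc_inv] at h
  -- h : (cc w)⁻¹ * pp w⁻¹ = pp w⁻¹ * (cc w)⁻¹
  have h3 := congrArg (fun x => cc w * x * cc w) h
  simpa [mul_assoc] using h3.symm

/-- `p'⁻¹ ⊂ c`. -/
lemma h_p'i_c (hP : PerpGroup G) : sub (pp w⁻¹)⁻¹ (cc w) := by
  have := h_pi_ci w⁻¹ hP
  rwa [cc_inv, inv_inv] at this

/-- `q' ⊂ c`. -/
lemma hq'_sub_c : sub (cc w * pp w⁻¹) (cc w) := by
  apply P_mpr
  have e : (cc w)⁻¹ * (cc w * pp w⁻¹) = pp w⁻¹ := by group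
  rw [e]
  exact hp'_sub_ci w

/-- `q' ∩ p = 1`. -/
lemma hq'p : meet (cc w * pp w⁻¹) (pp w) = 1 := by
  rw [meet_comm]
  exact meet_eq_one_of_sub (hp_sub_ti w) (by rw [meet_comm]; exact hq't w)

/-- `p' p ⊂ c⁻¹`  (join of the orthogonal bounded pair `(q', p)`). -/
lemma hF8 (hP : PerpGroup G) : sub (pp w⁻¹ * pp w) (cc w)⁻¹ := by
  have hj := perp_join hP (hq'p w) (hasJoin_of_bounded (hq'_sub_c w) (hp_sub_c w))
  have hle : sub (cc w * pp w⁻¹ * pp w) (cc w) := hj.2.2 (cc w) (hq'_sub_c w) (hp_sub_c w)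
  have h2 := P_mp hle
  have e : (cc w)⁻¹ * (cc w * pp w⁻¹ * pp w) = pp w⁻¹ * pp w := by group
  rwa [e] at h2

/-- `p p' ⊂ c`. -/
lemma hF8' (hP : PerpGroup G) : sub (pp w * pp w⁻¹) (cc w) := by
  have := hF8 (w := w⁻¹) hP
  rwa [inv_inv, cc_inv, inv_inv] at this

/-- `p` and `p'` commute. -/
lemma hppcomm (hP : PerpGroup G) : pp w * pp w⁻¹ = pp w⁻¹ * pp w := by
  have hJn := hasJoin_of_bounded (hq'_sub_c w) (hp_sub_c w)
  have h1 := perp_join hP (hq'p w) hJn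
  have h2 := perp_join hP (by rw [meet_comm]; exact hq'p w) (hasJoin_symm hJn)
  have he : cc w * pp w⁻¹ * pp w = pp w * (cc w * pp w⁻¹) := join_unique h1 (isJoin_swap h2)
  have he2 : cc w * (pp w⁻¹ * pp w) = cc w * (pp w * pp w⁻¹) := by
    calc cc w * (pp w⁻¹ * pp w) = cc w * pp w⁻¹ * pp w := by rw [mul_assoc]
      _ = pp w * (cc w * pp w⁻¹) := he
      _ = (pp w * cc w) * pp w⁻¹ := by rw [mul_assoc]
      _ = (cc w * pp w) * pp w⁻¹ := by rw [hcomm w hP]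
      _ = cc w * (pp w * pp w⁻¹) := by rw [mul_assoc]
  exact (mul_left_cancel he2).symm

lemma e_b : (tt w)⁻¹ * w⁻¹ = (cc w)⁻¹ * (tt w)⁻¹ := by unfold cc; group

/-- The wall: if `p ∩ p' = 1` then `p = 1`. -/
lemma wall_of_meet (hP : PerpGroup G) (hA4 : A4 G)
    (hG1 : meet (pp w) (pp w⁻¹) = 1) : pp w = 1 := by
  have hJn := hasJoin_of_bounded (hp_sub_ti w) (hp'_sub_ti w)
  have hj := perp_join hP hG1 hJn
  have hle : sub (pp w * pp w⁻¹) (tt w)⁻¹ := hj.2.2 _ (hp_sub_ti w) (hp'_sub_ti w)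
  have h1 : sub (pp w * pp w⁻¹) (cc w) := hF8' w hP
  have h2 : sub (pp w * pp w⁻¹) (cc w)⁻¹ := by
    rw [hppcomm w hP]; exact hF8 w hP
  have h3 : sub (pp w * pp w⁻¹) (pp w) := sub_meet h1 hle
  have h4 : sub (pp w * pp w⁻¹) (pp w⁻¹) := by
    have := sub_meet h2 hle
    rwa [← pp_inv] at this
  have h5 : sub (pp w * pp w⁻¹) (meet (pp w) (pp w⁻¹)) := sub_meet h3 h4
  rw [hG1] at h5
  have h6 : pp w * pp w⁻¹ = 1 := sub_one h5
  have h7 : (pp w)⁻¹ = pp w⁻¹ := mul_eq_one_iff_inv_eq.mp h6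
  apply hA4
  rw [h7]
  exact hasJoin_of_bounded (hp_sub_ti w) (hp'_sub_ti w)

/-- `c ∩ c⁻¹ = 1`. -/
lemma hs_one (hp1 : pp w = 1) (hp1' : pp w⁻¹ = 1) : meet (cc w) (cc w)⁻¹ = 1 := by
  have hca : sub (cc w) (cc w * (tt w)⁻¹) := by
    apply sub_mul_of_meet
    rw [← pp_inv]
    exact hp1'
  have hcb : sub (cc w)⁻¹ ((cc w)⁻¹ * (tt w)⁻¹) := by
    apply sub_mul_of_meet
    rw [inv_inv]
    exact hp1
  have h1 : sub (meet (cc w) (cc w)⁻¹) (meet (cc w * (tt w)⁻¹) ((cc w)⁻¹ * (tt w)⁻¹)) :=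
    sub_meet (sub_trans (meet_sub_left _ _) hca) (sub_trans (meet_sub_right _ _) hcb)
  have h2 := hab w
  rw [e_a, e_b] at h2
  rw [h2] at h1
  exact sub_one h1

/-- The `O2` family: `cᵏ ∩ t⁻¹ = 1` for `k ≥ 1`. -/
lemma hO2 (hP : PerpGroup G) (hp1 : pp w = 1) (hp1' : pp w⁻¹ = 1) :
    ∀ k : ℕ, meet (cc w ^ (k + 1)) (tt w)⁻¹ = 1 := by
  intro k
  induction k with
  | zero => rw [pow_one]; exact hp1
  | succ k ih =>
    set P := meet (cc w ^ (k + 2)) (tt w)⁻¹ with hPdef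
    have hPt : sub P (tt w)⁻¹ := meet_sub_right _ _
    have hPb : sub P (cc w ^ (k + 2)) := meet_sub_left _ _
    have hcP : meet (cc w) P = 1 := by
      rw [meet_comm]
      exact meet_eq_one_of_sub hPt (by rw [meet_comm]; exact hp1)
    have hcchain : sub (cc w) (cc w ^ (k + 2)) := by
      have := layer1_chain hP (hs_one w hp1 hp1') 0 (k + 1)
      rw [show 0 + 1 + (k + 1) = k + 2 by omega, show (0:ℕ) + 1 = 1 by omega, pow_one] at this
      exact this
    have hj := perp_join hP hcP (hasJoin_of_bounded hcchain hPb)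
    have hle : sub (cc w * P) (cc w ^ (k + 2)) := hj.2.2 _ hcchain hPb
    have hstep1 := P_mp hle
    have e1 : (cc w ^ (k + 2))⁻¹ * (cc w * P) = (cc w ^ (k + 1))⁻¹ * P := by
      rw [pow_succ']; group
    have e2 : (cc w ^ (k + 2))⁻¹ = (cc w ^ (k + 1))⁻¹ * (cc w)⁻¹ := by
      rw [pow_succ']; group
    rw [e1, e2] at hstep1
    have hmeet1 : meet ((cc w ^ (k + 1))⁻¹ * P) (cc w) = 1 := by
      apply meet_eq_one_of_sub hstep1
      have := layer1_meet hP (hs_one w hp1 hp1') (n := 1) (m := k + 2) le_rfl (by omega)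
      rw [pow_one] at this
      rw [meet_comm, ← e2]
      exact this
    have hstep2 : sub (P⁻¹ * cc w ^ (k + 1)) (P⁻¹ * cc w ^ (k + 2)) := by
      have h := sub_mul_of_meet (x := P⁻¹ * cc w ^ (k + 1)) (y := cc w) (by
        rw [mul_inv_rev, inv_inv]
        exact hmeet1)
      rw [mul_assoc, ← pow_succ] at h
      exact h
    have hdesc : sub P (cc w ^ (k + 1)) := D_lemma hPb hstep2
    have : sub P (meet (cc w ^ (k + 1)) (tt w)⁻¹) := sub_meet hdesc hPt
    rw [ih] at this
    exact sub_one this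

/-- Mirror `O2`: `c⁻ᵏ ∩ t⁻¹ = 1`. -/
lemma hO2m (hP : PerpGroup G) (hp1 : pp w = 1) (hp1' : pp w⁻¹ = 1) :
    ∀ k : ℕ, meet ((cc w)⁻¹ ^ (k + 1)) (tt w)⁻¹ = 1 := by
  intro k
  have := hO2 w⁻¹ hP hp1' (by rw [inv_inv]; exact hp1) k
  rwa [cc_inv, tt_inv] at this

lemma e_ck : ∀ k : ℕ, cc w ^ k = (tt w)⁻¹ * w ^ k * tt w := by
  intro k
  induction k with
  | zero => simp
  | succ k ih =>
    rw [pow_succ, ih, pow_succ]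
    unfold cc; group

/-- The `W` family: `t⁻¹ ∩ (cᵏ t⁻¹) = 1` for `k ≥ 1`. -/
lemma hW (hP : PerpGroup G) (hA2 : A2 G) (hp1 : pp w = 1) (hp1' : pp w⁻¹ = 1) :
    ∀ k : ℕ, meet (tt w)⁻¹ (cc w ^ (k + 1) * (tt w)⁻¹) = 1 := by
  have hta' : meet (tt w)⁻¹ (cc w * (tt w)⁻¹) = 1 := by
    have := hta w
    rwa [e_a] at this
  intro k
  match k with
  | 0 => rw [pow_one]; exact hta'
  | (j + 1) =>
    -- k + 1 = j + 2, with j + 1 ≥ 1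
    set ρ := meet (tt w)⁻¹ (cc w ^ (j + 2) * (tt w)⁻¹) with hρdef
    have hρt : sub ρ (tt w)⁻¹ := meet_sub_left _ _
    have hρW : sub ρ (cc w ^ (j + 2) * (tt w)⁻¹) := meet_sub_right _ _
    -- z := c^(j+1) ⊂ c^(j+2) t⁻¹
    have s1 : sub (cc w ^ (j + 1)) (cc w ^ (j + 2)) := by
      have := layer1_chain hP (hs_one w hp1 hp1') j 1
      rwa [show j + 1 + 1 = j + 2 by omega] at this
    have s2 : sub (cc w ^ (j + 2)) (cc w ^ (j + 2) * (tt w)⁻¹) := by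
      apply sub_mul_of_meet
      have := hO2m w hP hp1 hp1' (j + 1)
      rwa [inv_pow, show j + 1 + 1 = j + 2 by omega] at this
    have hzW : sub (cc w ^ (j + 1)) (cc w ^ (j + 2) * (tt w)⁻¹) := sub_trans s1 s2
    -- Step A : gate lemma + interval flip
    have hGL := gate_lemma (x := (tt w)⁻¹) hzW
    have hI := I_lemma hGL
    -- hI : sub ((c^(j+1))⁻¹ * ρ) ((c^(j+1))⁻¹ * t⁻¹)
    -- Step B : A2 instance
    have cond1 : meet ((cc w ^ (j + 1))⁻¹) (cc w) = 1 := by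
      rw [meet_comm]
      have := layer1_meet hP (hs_one w hp1 hp1') (n := 1) (m := j + 1) le_rfl (by omega)
      rwa [pow_one] at this
    have cond2 : meet (((cc w ^ (j + 1))⁻¹)⁻¹) (tt w)⁻¹ = 1 := by
      rw [inv_inv]
      exact hO2 w hP hp1 hp1' j
    have cond3 : meet ((cc w)⁻¹) (tt w)⁻¹ = 1 := by
      rw [← pp_inv]; exact hp1'
    have hA2app := hA2 _ _ _ cond1 cond2 cond3
    -- hA2app : sub (meet ((c^(j+1))⁻¹ * t⁻¹) (c * t⁻¹)) t⁻¹
    have hM1 : meet ((cc w ^ (j + 1))⁻¹ * (tt w)⁻¹) (cc w * (tt w)⁻¹) = 1 := by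
      have h1 : sub (meet ((cc w ^ (j + 1))⁻¹ * (tt w)⁻¹) (cc w * (tt w)⁻¹))
          (meet (tt w)⁻¹ (cc w * (tt w)⁻¹)) :=
        sub_meet hA2app (meet_sub_right _ _)
      rw [hta'] at h1
      exact sub_one h1
    have hmeetB : meet ((cc w ^ (j + 1))⁻¹ * ρ) (cc w * (tt w)⁻¹) = 1 :=
      meet_eq_one_of_sub hI hM1
    -- Step C
    have hC : sub (ρ⁻¹ * cc w ^ (j + 1)) (ρ⁻¹ * (cc w ^ (j + 2) * (tt w)⁻¹)) := by
      have h := sub_mul_of_meet (x := ρ⁻¹ * cc w ^ (j + 1)) (y := cc w * (tt w)⁻¹) (by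
        rw [mul_inv_rev, inv_inv]
        exact hmeetB)
      have e : ρ⁻¹ * cc w ^ (j + 1) * (cc w * (tt w)⁻¹) = ρ⁻¹ * (cc w ^ (j + 2) * (tt w)⁻¹) := by
        rw [show (j + 2) = (j + 1) + 1 by omega, pow_succ]
        group
      rwa [e] at h
    -- Step D and E
    have hD : sub ρ (cc w ^ (j + 1)) := D_lemma hρW hC
    have hE : sub ρ (meet (cc w ^ (j + 1)) (tt w)⁻¹) := sub_meet hD hρt
    rw [hO2 w hP hp1 hp1' j] at hE
    exact sub_one hE

/-- `t ⊂ wᵏ` for `k ≥ 1`. -/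
lemma hA_fam (hP : PerpGroup G) (hA2 : A2 G) (hp1 : pp w = 1) (hp1' : pp w⁻¹ = 1)
    (k : ℕ) : sub (tt w) (w ^ (k + 1)) := by
  have h := sub_mul_of_meet (x := tt w) (y := cc w ^ (k + 1) * (tt w)⁻¹)
    (hW w hP hA2 hp1 hp1' k)
  have e : tt w * (cc w ^ (k + 1) * (tt w)⁻¹) = w ^ (k + 1) := by
    rw [e_ck]; group
  rwa [e] at h

/-- The main computation, given the wall. -/
lemma main_of_wall (hP : PerpGroup G) (hA2 : A2 G) (hp1 : pp w = 1) (hp1' : pp w⁻¹ = 1)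
    {n m : ℕ} (hn : 1 ≤ n) (hm : 1 ≤ m) :
    meet (w ^ n) ((w ^ m)⁻¹) = tt w := by
  obtain ⟨n, rfl⟩ : ∃ k, n = k + 1 := ⟨n - 1, by omega⟩
  obtain ⟨m, rfl⟩ : ∃ k, m = k + 1 := ⟨m - 1, by omega⟩
  have hTn : sub (tt w) (w ^ (n + 1)) := hA_fam w hP hA2 hp1 hp1' n
  have hTm : sub (tt w) ((w ^ (m + 1))⁻¹) := by
    have := hA_fam w⁻¹ hP hA2 hp1' (by rw [inv_inv]; exact hp1) m
    rwa [tt_inv, inv_pow] at this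
  have hT := T_lemma hTn hTm
  -- A2 instance
  have cond1 : meet (cc w ^ (n + 1)) ((cc w ^ (m + 1))⁻¹) = 1 :=
    layer1_meet hP (hs_one w hp1 hp1') (by omega) (by omega)
  have cond2 : meet ((cc w ^ (n + 1))⁻¹) (tt w)⁻¹ = 1 := by
    have := hO2m w hP hp1 hp1' n
    rwa [inv_pow] at this
  have cond3 : meet (((cc w ^ (m + 1))⁻¹)⁻¹) (tt w)⁻¹ = 1 := by
    rw [inv_inv]
    exact hO2 w hP hp1 hp1' m
  have hA2app := hA2 _ _ _ cond1 cond2 cond3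
  -- rewrite the two products
  have e1 : cc w ^ (n + 1) * (tt w)⁻¹ = (tt w)⁻¹ * w ^ (n + 1) := by
    rw [e_ck]; group
  have e2 : (cc w ^ (m + 1))⁻¹ * (tt w)⁻¹ = (tt w)⁻¹ * (w ^ (m + 1))⁻¹ := by
    rw [e_ck]; group
  rw [e1, e2] at hA2app
  -- hA2app : sub X t⁻¹ where X := meet (t⁻¹ wⁿ) (t⁻¹ w⁻ᵐ)
  set X := meet ((tt w)⁻¹ * w ^ (n + 1)) ((tt w)⁻¹ * (w ^ (m + 1))⁻¹) with hXdef
  have hXsub1 : sub (tt w * X) (tt w) := by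
    apply P_mpr
    have e : (tt w)⁻¹ * (tt w * X) = X := by group
    rw [e]
    exact hA2app
  have hXin : sub ((tt w)⁻¹ * (tt w * X)) ((tt w)⁻¹ * w ^ (n + 1)) := by
    have e : (tt w)⁻¹ * (tt w * X) = X := by group
    rw [e]
    exact meet_sub_left _ _
  have hXsub2 : sub (tt w) (tt w * X) := D_lemma hTn hXin
  have hXone : tt w * X = tt w := sub_antisymm hXsub1 hXsub2
  nth_rewrite 2 [← mul_one (tt w)] at hXone
  have hX1 : X = 1 := mul_left_cancel hXone
  rw [hT, hX1, mul_one]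

/-- The key cancellation: `p · p' = 1`.  (Join `p ∪ q'` inside `[1,c]`, M2 twice,
then `q ∩ t⁻¹ = 1`.) -/
lemma pp_mul_eq_one (hP : PerpGroup G) : pp w * pp w⁻¹ = 1 := by
  have hJn := hasJoin_of_bounded (hp_sub_c w) (hq'_sub_c w)
  have hpq' : meet (pp w) (cc w * pp w⁻¹) = 1 := by rw [meet_comm]; exact hq'p w
  have hj := perp_join hP hpq' hJn
  have h1 : sub (pp w) (pp w * (cc w * pp w⁻¹)) := hj.1
  have h2 : sub (cc w * pp w⁻¹) (pp w * (cc w * pp w⁻¹)) := hj.2.1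
  have h3 : sub (pp w * (cc w * pp w⁻¹)) (cc w) := hj.2.2 (cc w) (hp_sub_c w) (hq'_sub_c w)
  have e0 : pp w * (cc w * pp w⁻¹) = cc w * (pp w * pp w⁻¹) := by
    rw [← mul_assoc, ← hcomm w hP, mul_assoc]
  rw [e0] at h1 h2 h3
  have hA := M2 h2 h3
  have hB := M2 h1 h3
  have eA1 : (cc w)⁻¹ * (cc w * (pp w * pp w⁻¹)) = pp w * pp w⁻¹ := by group
  have eA2 : (cc w)⁻¹ * (cc w * pp w⁻¹) = pp w⁻¹ := by group
  rw [eA1, eA2] at hA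
  rw [eA1] at hB
  -- hA : sub (p p') p' ;  hB : sub (p p') (c⁻¹ p)
  have hsub : sub (pp w * pp w⁻¹) (meet ((cc w)⁻¹ * pp w) (tt w)⁻¹) :=
    sub_meet hB (sub_trans hA (hp'_sub_ti w))
  rw [hqt w] at hsub
  exact sub_one hsub

/-- The wall: `p = 1`. -/
lemma wall (hP : PerpGroup G) (hA4 : A4 G) : pp w = 1 := by
  have h6 := pp_mul_eq_one w hP
  have h7 : (pp w)⁻¹ = pp w⁻¹ := mul_eq_one_iff_inv_eq.mp h6
  apply hA4
  rw [h7]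
  exact hasJoin_of_bounded (hp_sub_ti w) (hp'_sub_ti w)


/-- Lemma 4.3: in an A-group, `wⁿ ∩ w⁻ᵐ = w ∩ w⁻¹` for all
natural numbers `n, m ≥ 1`. -/
theorem meet_pow_inv_pow {G : Type*} [MedianGroup G] (hG : AGroup G)
    (w : G) (n m : ℕ) (hn : 1 ≤ n) (hm : 1 ≤ m) :
    meet (w ^ n) (w ^ m)⁻¹ = meet w w⁻¹ := by
  obtain ⟨hP, hA1, hA2, hA4⟩ := hG
  have hp1 : pp w = 1 := wall w hP hA4
  have hp1' : pp w⁻¹ = 1 := wall w⁻¹ hP hA4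
  exact main_of_wall w hP hA2 hp1 hp1' hn hm

end MedianGroup
end ArtinMedian
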